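/- Consider a finite probability space of group data: let (X_{1:m}, Y_{1:m}) be distributed so that Y_1,...,Y_m are conditionally independent given X_{1:m} with P(Y_i | X_{1:m}) = P(Y_i | X_i), let g : {1,...,k}^m → 𝒵 be an aggregate function on a finite set 𝒵, and set Z = g(Y_{1:m}). Assume each X_i is marginally distributed as X and (X_i, Y_i) is distributed as (X, Y). Then for any loss L, E[L(X,Y)] = E_{(X_{1:m}, Z)}[ (1/m) · (1/P(Z | X_{1:m})) · ∑_{i=1}^m ∑_{j=1}^k P(Z, Y_i = j | X_{1:m}) · L(X_i, j) ], on the event P(Z | X_{1:m}) > 0. -/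

import Mathlib

/-! On the event `P(Z | X) > 0` the importance weight `1 / P(Z | X)` cancels against the
density of `Z` in the outer expectation, and off it the joint probabilities `P(Z, Yᵢ = j | X)`
vanish too, so the right-hand side is `(1/m) ∑ᵢ E_X[∑_z ∑_j P(Z = z, Yᵢ = j | X) L(Xᵢ, j)]`.
Summing out `z` and then the other labels of the product distribution leaves `P(Yᵢ = j | Xᵢ)`,
so the `i`-th term is `E[L(Xᵢ, Yᵢ)] = E[L(X, Y)]`. -/

open Finset

theorem sum_prod_filter_apply_eq_of_sum_eq_one {ι α R : Type*} [Fintype ι] [DecidableEq ι]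
    [Fintype α] [DecidableEq α] [CommSemiring R] (f : ι → α → R) (hf : ∀ v, ∑ a, f v a = 1)
    (i : ι) (j : α) :
    ∑ y ∈ univ.filter (fun y : ι → α => y i = j), ∏ v, f v (y v) = f i j := by
  rw [← Fintype.piFinset_univ,
    ← Fintype.piFinset_update_singleton_eq_filter_piFinset_eq (fun _ => univ) i (mem_univ j),
    ← prod_univ_sum, Fintype.prod_eq_single i fun v hv => by simp [Function.update_of_ne hv, hf]]
  simp

theorem sum_sum_filter_eq_and {β γ M : Type*} [Fintype β] [Fintype γ] [DecidableEq γ]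
    [AddCommMonoid M] (g : β → γ) (p : β → Prop) [DecidablePred p] (w : β → M) :
    ∑ z, ∑ y ∈ univ.filter (fun y => g y = z ∧ p y), w y = ∑ y ∈ univ.filter p, w y := by
  simp_rw [and_comm (a := g _ = _), ← filter_filter]
  exact sum_fiberwise _ g w

theorem sum_filter_mul_eq_sum_mul_comp {β α R : Type*} [Fintype β] [Fintype α] [DecidableEq α]
    [CommSemiring R] (p : β → R) (π : β → α) (φ : α → R) :
    ∑ a, (∑ x ∈ univ.filter (fun x => π x = a), p x) * φ a = ∑ x, p x * φ (π x) := by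
  rw [← sum_fiberwise univ π]
  refine sum_congr rfl fun a _ => ?_
  rw [sum_mul]
  exact sum_congr rfl fun x hx => by rw [(mem_filter.mp hx).2]

theorem sum_eq_zero_of_subset_of_nonneg {β M : Type*} [AddCommMonoid M] [PartialOrder M]
    [IsOrderedAddMonoid M] {s t : Finset β} {w : β → M} (hts : t ⊆ s) (hw : ∀ y ∈ s, 0 ≤ w y)
    (hs : ∑ y ∈ s, w y = 0) : ∑ y ∈ t, w y = 0 :=
  le_antisymm (hs ▸ sum_le_sum_of_subset_of_nonneg hts fun y hy _ => hw y hy)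
    (sum_nonneg fun y hy => hw y (hts hy))

theorem ite_pos_mul_mul_one_div_mul {K : Type*} [Field K] [LinearOrder K] {p c : K} (hp : 0 ≤ p)
    (hc : p = 0 → c = 0) (a b : K) :
    (if 0 < p then a * p * (b * (1 / p) * c) else 0) = a * (b * c) := by
  rcases hp.lt_or_eq with hp | hp
  · rw [if_pos hp]; field_simp
  · simp [← hp, hc hp.symm]

open scoped Classical

theorem stmt_12_general {𝒳 Z : Type*} [Fintype 𝒳] [Fintype Z] {k m : ℕ} (hm : 0 < m)
    -- distribution of the group of instances X_{1:m}
    (px : (Fin m → 𝒳) → ℝ)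
    -- conditional label distribution P(Y_i = j | X_i = a) = η a j
    -- (labels are conditionally independent given the instances: Assumption 2)
    (η : 𝒳 → Fin k → ℝ) (hη0 : ∀ a j, 0 ≤ η a j) (hη1 : ∀ a, ∑ j, η a j = 1)
    -- the aggregate function: Z = g(Y_{1:m})  (Assumption 1)
    (g : (Fin m → Fin k) → Z)
    -- each (X_i, Y_i) is marginally distributed as (X, Y) with joint pmf μ
    (μ : 𝒳 → Fin k → ℝ)
    (hμ : ∀ (i : Fin m) (a : 𝒳) (j : Fin k),
      μ a j = ∑ x ∈ Finset.univ.filter (fun x : Fin m → 𝒳 => x i = a), px x * η a j)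
    -- group-level probability P(Z = z | X_{1:m} = x)
    (pZ : (Fin m → 𝒳) → Z → ℝ)
    (hpZ : ∀ x z, pZ x z =
      ∑ y ∈ Finset.univ.filter (fun y : Fin m → Fin k => g y = z), ∏ i, η (x i) (y i))
    -- instance-level probability P(Z = z, Y_i = j | X_{1:m} = x)
    (pZY : (Fin m → 𝒳) → Z → Fin m → Fin k → ℝ)
    (hpZY : ∀ x z i j, pZY x z i j =
      ∑ y ∈ Finset.univ.filter (fun y : Fin m → Fin k => g y = z ∧ y i = j),
        ∏ v, η (x v) (y v))
    -- an arbitrary loss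
    (L : 𝒳 → Fin k → ℝ) :
    -- E[L(X,Y)] equals the expectation over (X_{1:m}, Z) of the aggregate loss,
    -- on the event P(Z | X_{1:m}) > 0
    ∑ a, ∑ j, μ a j * L a j =
      ∑ x, ∑ z,
        if 0 < pZ x z then
          px x * pZ x z *
            ((1 / (m : ℝ)) * (1 / pZ x z) * ∑ i, ∑ j, pZY x z i j * L (x i) j)
        else 0 := by
  have hm' : (m : ℝ) ≠ 0 := Nat.cast_ne_zero.mpr hm.ne'
  have hterm : ∀ x z, (if 0 < pZ x z then
      px x * pZ x z * ((1 / (m : ℝ)) * (1 / pZ x z) * ∑ i, ∑ j, pZY x z i j * L (x i) j)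
      else 0) = px x * ((1 / (m : ℝ)) * ∑ i, ∑ j, pZY x z i j * L (x i) j) := by
    intro x z
    have hweight : ∀ y : Fin m → Fin k, 0 ≤ ∏ v, η (x v) (y v) :=
      fun y => prod_nonneg fun v _ => hη0 _ _
    refine ite_pos_mul_mul_one_div_mul (hpZ x z ▸ sum_nonneg fun y _ => hweight y)
      (fun h => ?_) _ _
    have hpZY_zero : ∀ i j, pZY x z i j = 0 := fun i j => by
      rw [hpZY]
      exact sum_eq_zero_of_subset_of_nonneg (monotone_filter_right _ fun y _ hy => hy.1)
        (fun y _ => hweight y) (hpZ x z ▸ h)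
    simp [hpZY_zero]
  have hmarg_Z : ∀ x i j, ∑ z, pZY x z i j = η (x i) j := fun x i j => by
    simp_rw [hpZY, sum_sum_filter_eq_and g (fun y => y i = j)]
    exact sum_prod_filter_apply_eq_of_sum_eq_one (fun v => η (x v)) (fun v => hη1 _) i j
  have hmarg_X : ∀ i, ∑ a, ∑ j, μ a j * L a j = ∑ x, px x * ∑ j, η (x i) j * L (x i) j := by
    intro i
    simp_rw [hμ i, ← sum_mul, mul_assoc, ← mul_sum]
    exact sum_filter_mul_eq_sum_mul_comp px (· i) fun a => ∑ j, η a j * L a j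
  symm
  calc ∑ x, ∑ z, _
      = ∑ x, px x * ((1 / (m : ℝ)) * ∑ i, ∑ j, η (x i) j * L (x i) j) := by
        simp_rw [hterm, ← mul_sum, sum_comm (γ := Z), ← sum_mul, hmarg_Z]
    _ = (1 / (m : ℝ)) * ∑ i, ∑ x, px x * ∑ j, η (x i) j * L (x i) j := by
        simp_rw [mul_sum]
        rw [sum_comm]
        exact sum_congr rfl fun x _ => sum_congr rfl fun i _ => sum_congr rfl fun j _ => by ring
    _ = (1 / (m : ℝ)) * ∑ i : Fin m, ∑ a, ∑ j, μ a j * L a j := by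
        simp_rw [← hmarg_X]
    _ = ∑ a, ∑ j, μ a j * L a j := by
        rw [sum_const, card_univ, Fintype.card_fin, nsmul_eq_mul]
        field_simp

theorem stmt_12 {𝒳 Z : Type*} [Fintype 𝒳] [Fintype Z] {k m : ℕ} (hm : 0 < m)
    -- distribution of the group of instances X_{1:m}
    (px : (Fin m → 𝒳) → ℝ) (hpx0 : ∀ x, 0 ≤ px x) (hpx1 : ∑ x, px x = 1)
    -- conditional label distribution P(Y_i = j | X_i = a) = η a j
    -- (labels are conditionally independent given the instances: Assumption 2)
    (η : 𝒳 → Fin k → ℝ) (hη0 : ∀ a j, 0 ≤ η a j) (hη1 : ∀ a, ∑ j, η a j = 1)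
    -- the aggregate function: Z = g(Y_{1:m})  (Assumption 1)
    (g : (Fin m → Fin k) → Z)
    -- each (X_i, Y_i) is marginally distributed as (X, Y) with joint pmf μ
    (μ : 𝒳 → Fin k → ℝ)
    (hμ : ∀ (i : Fin m) (a : 𝒳) (j : Fin k),
      μ a j = ∑ x ∈ Finset.univ.filter (fun x : Fin m → 𝒳 => x i = a), px x * η a j)
    -- group-level probability P(Z = z | X_{1:m} = x)
    (pZ : (Fin m → 𝒳) → Z → ℝ)
    (hpZ : ∀ x z, pZ x z =
      ∑ y ∈ Finset.univ.filter (fun y : Fin m → Fin k => g y = z), ∏ i, η (x i) (y i))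
    -- instance-level probability P(Z = z, Y_i = j | X_{1:m} = x)
    (pZY : (Fin m → 𝒳) → Z → Fin m → Fin k → ℝ)
    (hpZY : ∀ x z i j, pZY x z i j =
      ∑ y ∈ Finset.univ.filter (fun y : Fin m → Fin k => g y = z ∧ y i = j),
        ∏ v, η (x v) (y v))
    -- an arbitrary loss
    (L : 𝒳 → Fin k → ℝ) :
    -- E[L(X,Y)] equals the expectation over (X_{1:m}, Z) of the aggregate loss,
    -- on the event P(Z | X_{1:m}) > 0
    ∑ a, ∑ j, μ a j * L a j =
      ∑ x, ∑ z,
        if 0 < pZ x z then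
          px x * pZ x z *
            ((1 / (m : ℝ)) * (1 / pZ x z) * ∑ i, ∑ j, pZY x z i j * L (x i) j)
        else 0 :=
  stmt_12_general hm px η hη0 hη1 g μ hμ pZ hpZ pZY hpZY L
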